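/- arXiv:2004.06742 — 2 statements merged into one kernel-verified Lean document; each statement's English description precedes it below -/
import Mathlib

section
/- Assume (H1) and (H2). Let (ξ₀…ξ_{n−1}) be a word whose admissibility interval I_{[ξ₀…ξ_{n−1}]} is nonempty and set g = f_{[ξ₀…ξ_{n−1}]}. Then: (1) if g has a fixed point, the periodic sequence ξ = (ξ₀…ξ_{n−1})^ℤ belongs to Σ and exactly one of the following holds: (1a) g has exactly two fixed points p⁺ < p⁻, with g'(p⁺) > 1 (repelling) and g'(p⁻) < 1 (contracting), and I_ξ = [p⁺, p⁻]; (1b) g has exactly one fixed point p, which is parabolic (g'(p) = 1), and I_ξ = {p}; (2) if g has no fixed point then (ξ₀…ξ_{n−1})^ℤ ∉ Σ. -/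
open Set MeasureTheory Filter

namespace DGR

/-- The two-sided sequence space `Σ₂ = {0,1}^ℤ`. -/
abbrev Seq2 := ℤ → Fin 2

/-- The left shift map `σ`. -/
def shift (ξ : Seq2) : Seq2 := fun n => ξ (n + 1)

/-- The constant sequence `0^ℤ`. -/
def zeroSeq : Seq2 := fun _ => 0

/-- The skew-product `F̃(ξ,x) = (σ ξ, f̃_{ξ₀} x)`. -/
def F (f0 f1 : ℝ → ℝ) (p : Seq2 × ℝ) : Seq2 × ℝ :=
  (shift p.1, if p.1 0 = 0 then f0 p.2 else f1 p.2)

/-- The fixed point `P = (0^ℤ, 1)`. -/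
def Pfix : Seq2 × ℝ := (zeroSeq, 1)

/-- The fixed point `Q = (0^ℤ, 0)`. -/
def Qfix : Seq2 × ℝ := (zeroSeq, 0)

/-- `f_ξ^n = f_{ξ_{n-1}} ∘ ⋯ ∘ f_{ξ₀}`. -/
def fIter (f0 f1 : ℝ → ℝ) (ξ : Seq2) : ℕ → ℝ → ℝ
  | 0, x => x
  | n + 1, x => (if ξ (n : ℤ) = 0 then f0 else f1) (fIter f0 f1 ξ n x)

/-- The derivative `(f_ξ^n)'(x)` (chain rule product). -/
def fIterDeriv (f0 f1 df0 df1 : ℝ → ℝ) (ξ : Seq2) : ℕ → ℝ → ℝ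
  | 0, _ => 1
  | n + 1, x => fIterDeriv f0 f1 df0 df1 ξ n x *
      (if ξ (n : ℤ) = 0 then df0 else df1) (fIter f0 f1 ξ n x)

/-- `ξ⁺` is admissible for `x`: all forward iterates are defined and stay in `[0,1]`. -/
def forwardAdmissible (f0 f1 : ℝ → ℝ) (d : ℝ) (ξ : Seq2) (x : ℝ) : Prop :=
  ∀ n : ℕ, fIter f0 f1 ξ n x ∈ Icc (0 : ℝ) 1 ∧ (ξ (n : ℤ) = 1 → d ≤ fIter f0 f1 ξ n x)

/-- `ξ⁻` is admissible for `x`: there is a backward orbit through `x` staying in `[0,1]`. -/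
def backwardAdmissible (f0 f1 : ℝ → ℝ) (d : ℝ) (ξ : Seq2) (x : ℝ) : Prop :=
  ∃ y : ℕ → ℝ, y 0 = x ∧ ∀ m : ℕ,
    y m ∈ Icc (0 : ℝ) 1 ∧
    (ξ (-(m : ℤ) - 1) = 0 → f0 (y (m + 1)) = y m) ∧
    (ξ (-(m : ℤ) - 1) = 1 → d ≤ y (m + 1) ∧ f1 (y (m + 1)) = y m)

/-- The maximal invariant set `Γ` of `F̃` in `Σ₂ × [0,1]`. -/
def Gamma (f0 f1 : ℝ → ℝ) (d : ℝ) : Set (Seq2 × ℝ) :=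
  { p | forwardAdmissible f0 f1 d p.1 p.2 ∧ backwardAdmissible f0 f1 d p.1 p.2 }

/-- The subshift `Σ = π(Γ)` of admissible sequences. -/
def SigmaA (f0 f1 : ℝ → ℝ) (d : ℝ) : Set Seq2 := Prod.fst '' Gamma f0 f1 d

/-- `I_{ξ⁺}`. -/
def Iplus (f0 f1 : ℝ → ℝ) (d : ℝ) (ξ : Seq2) : Set ℝ := { x | forwardAdmissible f0 f1 d ξ x }

/-- `I_{ξ⁻}`. -/
def Iminus (f0 f1 : ℝ → ℝ) (d : ℝ) (ξ : Seq2) : Set ℝ := { x | backwardAdmissible f0 f1 d ξ x }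

/-- `I_ξ = I_{ξ⁺} ∩ I_{ξ⁻}`, the spine over `ξ`. -/
def Ifiber (f0 f1 : ℝ → ℝ) (d : ℝ) (ξ : Seq2) : Set ℝ := Iplus f0 f1 d ξ ∩ Iminus f0 f1 d ξ

/-- `x_{ξ⁺}`, the left endpoint of `I_{ξ⁺} = [x_{ξ⁺}, 1]`. -/
noncomputable def xPlus (f0 f1 : ℝ → ℝ) (d : ℝ) (ξ : Seq2) : ℝ := sInf (Iplus f0 f1 d ξ)

/-- `x_{ξ⁻}`, the right endpoint of `I_{ξ⁻} = [0, x_{ξ⁻}]`. -/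
noncomputable def xMinus (f0 f1 : ℝ → ℝ) (d : ℝ) (ξ : Seq2) : ℝ := sSup (Iminus f0 f1 d ξ)

/-- Hypothesis (H1), stated for strictly increasing differentiable extensions
`f0, f1 : ℝ → ℝ` with derivative functions `df0, df1`, whose restrictions to
`[0,1]` resp. `[d,1]` are the fiber maps. -/
structure H1 (f0 f1 df0 df1 : ℝ → ℝ) (d : ℝ) : Prop where
  d_mem : d ∈ Ioo (0 : ℝ) 1
  mono0 : StrictMono f0
  mono1 : StrictMono f1
  hasDeriv0 : ∀ x, HasDerivAt f0 (df0 x) x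
  hasDeriv1 : ∀ x, HasDerivAt f1 (df1 x) x
  contDeriv0 : ContinuousOn df0 (Icc 0 1)
  contDeriv1 : ContinuousOn df1 (Icc d 1)
  maps0 : MapsTo f0 (Icc 0 1) (Icc 0 1)
  surj0 : SurjOn f0 (Icc 0 1) (Icc 0 1)
  maps1 : MapsTo f1 (Icc d 1) (Icc 0 1)
  deriv0_zero : 1 < df0 0
  deriv0_one : df0 1 ∈ Ioo (0 : ℝ) 1
  f0_above : ∀ x ∈ Ioo (0 : ℝ) 1, x < f0 x
  f1_d : f1 d = 0
  f1_below : ∀ x ∈ Icc d 1, f1 x < x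
  deriv1_one : 0 < df1 1

/-- Hypothesis (H2): `f₀'` strictly decreasing, `f₁'` nonincreasing. -/
def H2 (df0 df1 : ℝ → ℝ) (d : ℝ) : Prop :=
  StrictAntiOn df0 (Icc 0 1) ∧ AntitoneOn df1 (Icc d 1)

/-- Hypothesis (H2+) with constant `M`. -/
def H2plus (df0 df1 : ℝ → ℝ) (d M : ℝ) : Prop :=
  1 < M ∧
  (∀ x ∈ Icc (0 : ℝ) 1, ∀ y ∈ Icc (0 : ℝ) 1, x < y →
    M⁻¹ * (y - x) ≤ Real.log (df0 x) - Real.log (df0 y) ∧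
      Real.log (df0 x) - Real.log (df0 y) ≤ M * (y - x)) ∧
  (∀ x ∈ Icc d 1, ∀ y ∈ Icc d 1, x < y →
    M⁻¹ * (y - x) ≤ Real.log (df1 x) - Real.log (df1 y) ∧
      Real.log (df1 x) - Real.log (df1 y) ≤ M * (y - x))

/-- The fiber Lyapunov exponent `χ(μ) = ∫ log f'_{ξ₀}(x) dμ(ξ,x)`. -/
noncomputable def lyap (df0 df1 : ℝ → ℝ) (μ : Measure (Seq2 × ℝ)) : ℝ :=
  ∫ p, Real.log ((if p.1 0 = 0 then df0 else df1) p.2) ∂μ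

/-- An `F`-invariant Borel probability measure on `Γ`. -/
def IsInvGamma (f0 f1 : ℝ → ℝ) (d : ℝ) (μ : Measure (Seq2 × ℝ)) : Prop :=
  IsProbabilityMeasure μ ∧ μ (Gamma f0 f1 d) = 1 ∧ μ.map (F f0 f1) = μ

/-- An ergodic `F`-invariant Borel probability measure on `Γ`. -/
def IsErgGamma (f0 f1 : ℝ → ℝ) (d : ℝ) (μ : Measure (Seq2 × ℝ)) : Prop :=
  IsInvGamma f0 f1 d μ ∧ Ergodic (F f0 f1) μ

/-- A `σ`-invariant Borel probability measure on `Σ`. -/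
def IsInvSigma (f0 f1 : ℝ → ℝ) (d : ℝ) (ν : Measure Seq2) : Prop :=
  IsProbabilityMeasure ν ∧ ν (SigmaA f0 f1 d) = 1 ∧ ν.map shift = ν

/-- An ergodic `σ`-invariant Borel probability measure on `Σ`. -/
def IsErgSigma (f0 f1 : ℝ → ℝ) (d : ℝ) (ν : Measure Seq2) : Prop :=
  IsInvSigma f0 f1 d ν ∧ Ergodic shift ν

/-- `f_{[w]} = f_{w_{n-1}} ∘ ⋯ ∘ f_{w_0}` for a finite word `w`. -/
def fWord (f0 f1 : ℝ → ℝ) : List (Fin 2) → ℝ → ℝ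
  | [], x => x
  | i :: w, x => fWord f0 f1 w ((if i = 0 then f0 else f1) x)

/-- The derivative `(f_{[w]})'(x)`. -/
def fWordDeriv (f0 f1 df0 df1 : ℝ → ℝ) : List (Fin 2) → ℝ → ℝ
  | [], _ => 1
  | i :: w, x => (if i = 0 then df0 x else df1 x) *
      fWordDeriv f0 f1 df0 df1 w ((if i = 0 then f0 else f1) x)

/-- The word `w` is (forward) admissible at `x`. -/
def wordAdm (f0 f1 : ℝ → ℝ) (d : ℝ) : List (Fin 2) → ℝ → Prop
  | [], x => x ∈ Icc (0 : ℝ) 1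
  | i :: w, x => x ∈ Icc (0 : ℝ) 1 ∧ (i = 1 → d ≤ x) ∧
      wordAdm f0 f1 d w ((if i = 0 then f0 else f1) x)

/-- The admissibility interval `I_{[w]}`. -/
def IWord (f0 f1 : ℝ → ℝ) (d : ℝ) (w : List (Fin 2)) : Set ℝ := { x | wordAdm f0 f1 d w x }

/-- The point `a_{[w]}`, left endpoint of `I_{[w]} = [a_{[w]}, 1]`. -/
noncomputable def aWord (f0 f1 : ℝ → ℝ) (d : ℝ) (w : List (Fin 2)) : ℝ := sInf (IWord f0 f1 d w)

/-- The periodic sequence `w^ℤ`. -/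
def perSeq (w : List (Fin 2)) : Seq2 := fun n => w.getD (n % (w.length : ℤ)).toNat 0

/-- The finite word `(ξ_a, ξ_{a+1}, …, ξ_{a+n-1})` read off a sequence. -/
def seqWord (ξ : Seq2) (a : ℤ) (n : ℕ) : List (Fin 2) := List.ofFn fun i : Fin n => ξ (a + (i.1 : ℤ))

/-- `X` is a periodic point of `F` in `Γ` with period `n ≥ 1`. -/
def IsPerPt (f0 f1 : ℝ → ℝ) (d : ℝ) (X : Seq2 × ℝ) (n : ℕ) : Prop :=
  X ∈ Gamma f0 f1 d ∧ 1 ≤ n ∧ (F f0 f1)^[n] X = X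

/-- Hyperbolic periodic point (the multiplier is different from 1). -/
def IsHypPerPt (f0 f1 df0 df1 : ℝ → ℝ) (d : ℝ) (X : Seq2 × ℝ) : Prop :=
  ∃ n, IsPerPt f0 f1 d X n ∧ fIterDeriv f0 f1 df0 df1 X.1 n X.2 ≠ 1

/-- Hyperbolic periodic point of expanding type. -/
def IsExpPerPt (f0 f1 df0 df1 : ℝ → ℝ) (d : ℝ) (X : Seq2 × ℝ) : Prop :=
  ∃ n, IsPerPt f0 f1 d X n ∧ 1 < fIterDeriv f0 f1 df0 df1 X.1 n X.2

/-- Hyperbolic periodic point of contracting type. -/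
def IsConPerPt (f0 f1 df0 df1 : ℝ → ℝ) (d : ℝ) (X : Seq2 × ℝ) : Prop :=
  ∃ n, IsPerPt f0 f1 d X n ∧ 0 < fIterDeriv f0 f1 df0 df1 X.1 n X.2 ∧
    fIterDeriv f0 f1 df0 df1 X.1 n X.2 < 1

/-- Parabolic periodic point (multiplier 1). -/
def IsParPerPt (f0 f1 df0 df1 : ℝ → ℝ) (d : ℝ) (X : Seq2 × ℝ) : Prop :=
  ∃ n, IsPerPt f0 f1 d X n ∧ fIterDeriv f0 f1 df0 df1 X.1 n X.2 = 1

/-- The stable set `W^s(R, F)` of a point, for `F : Γ → Γ`. -/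
def Ws (f0 f1 : ℝ → ℝ) (d : ℝ) (R : Seq2 × ℝ) : Set (Seq2 × ℝ) :=
  { X | (∀ k : ℕ, (F f0 f1)^[k] X ∈ Gamma f0 f1 d) ∧
      Tendsto (fun k => (F f0 f1)^[k] X) atTop (nhds R) }

/-- The unstable set `W^u(R, F) = W^s(R, F⁻¹)` of a point, for `F : Γ → Γ`. -/
def Wu (f0 f1 : ℝ → ℝ) (d : ℝ) (R : Seq2 × ℝ) : Set (Seq2 × ℝ) :=
  { X | ∃ Z : ℕ → Seq2 × ℝ, Z 0 = X ∧
      (∀ m : ℕ, Z m ∈ Gamma f0 f1 d ∧ F f0 f1 (Z (m + 1)) = Z m) ∧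
      Tendsto Z atTop (nhds R) }

/-- The stable set of the orbit of `R`. -/
def WsOrbit (f0 f1 : ℝ → ℝ) (d : ℝ) (R : Seq2 × ℝ) : Set (Seq2 × ℝ) :=
  ⋃ j : ℕ, Ws f0 f1 d ((F f0 f1)^[j] R)

/-- The unstable set of the orbit of `R`. -/
def WuOrbit (f0 f1 : ℝ → ℝ) (d : ℝ) (R : Seq2 × ℝ) : Set (Seq2 × ℝ) :=
  ⋃ j : ℕ, Wu f0 f1 d ((F f0 f1)^[j] R)

/-- The homoclinic class `H(R,F)`. -/
def homClass (f0 f1 : ℝ → ℝ) (d : ℝ) (R : Seq2 × ℝ) : Set (Seq2 × ℝ) :=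
  closure (WsOrbit f0 f1 d R ∩ WuOrbit f0 f1 d R)

/-- `R₁` and `R₂` are homoclinically related. -/
def HomRel (f0 f1 : ℝ → ℝ) (d : ℝ) (R₁ R₂ : Seq2 × ℝ) : Prop :=
  (WsOrbit f0 f1 d R₁ ∩ WuOrbit f0 f1 d R₂).Nonempty ∧
  (WuOrbit f0 f1 d R₁ ∩ WsOrbit f0 f1 d R₂).Nonempty

/-- A set is (fiber) hyperbolic of expanding type. -/
def IsHypExpanding (f0 f1 df0 df1 : ℝ → ℝ) (Λ : Set (Seq2 × ℝ)) : Prop :=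
  ∃ C : ℝ, 0 < C ∧ ∃ α : ℝ, 0 < α ∧ ∀ p ∈ Λ, ∀ n : ℕ, 1 ≤ n →
    C * Real.exp (α * n) ≤ fIterDeriv f0 f1 df0 df1 p.1 n p.2

/-- A set is (fiber) hyperbolic of contracting type (backward iterates expand). -/
def IsHypContracting (f0 f1 df0 df1 : ℝ → ℝ) (d : ℝ) (Λ : Set (Seq2 × ℝ)) : Prop :=
  ∃ C : ℝ, 0 < C ∧ ∃ α : ℝ, 0 < α ∧ ∀ p ∈ Λ, ∀ Z : ℕ → Seq2 × ℝ, Z 0 = p →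
    (∀ m : ℕ, Z m ∈ Gamma f0 f1 d ∧ F f0 f1 (Z (m + 1)) = Z m) →
    ∀ n : ℕ, 1 ≤ n → fIterDeriv f0 f1 df0 df1 (Z n).1 n (Z n).2 ≤ C * Real.exp (-(α * n))

/-- The nonwandering set `Ω(Γ, F)` of `F : Γ → Γ`. -/
def nonwandering (f0 f1 : ℝ → ℝ) (d : ℝ) : Set (Seq2 × ℝ) :=
  { X | X ∈ Gamma f0 f1 d ∧ ∀ U : Set (Seq2 × ℝ), IsOpen U → X ∈ U →
      ∃ n : ℕ, 1 ≤ n ∧ ∃ Y ∈ U ∩ Gamma f0 f1 d, (F f0 f1)^[n] Y ∈ U ∩ Gamma f0 f1 d }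

/-- The finite word `w` occurs in the sequence `ξ`. -/
def OccursIn (w : List (Fin 2)) (ξ : Seq2) : Prop :=
  ∃ k : ℤ, ∀ i : ℕ, i < w.length → ξ (k + (i : ℤ)) = w.getD i 0

/-- The set `Σ^het` of heteroclinic admissible sequences. -/
def SigmaHet (f0 f1 : ℝ → ℝ) (d : ℝ) : Set Seq2 :=
  { ξ | ξ ∈ SigmaA f0 f1 d ∧ ∃ k : ℤ, ∃ w : List (Fin 2),
      (∀ m : ℤ, m < k → ξ m = 0) ∧
      (∀ i : ℕ, i < w.length → ξ (k + (i : ℤ)) = w.getD i 0) ∧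
      (∀ m : ℤ, k + (w.length : ℤ) ≤ m → ξ m = 0) ∧
      fWord f0 f1 w 1 = 0 }

/-- `Σ^cod = Σ ∖ Σ^het`. -/
def SigmaCod (f0 f1 : ℝ → ℝ) (d : ℝ) : Set Seq2 := SigmaA f0 f1 d \ SigmaHet f0 f1 d

/-- `Γ^cod = π⁻¹(Σ^cod) ∩ Γ`. -/
def GammaCod (f0 f1 : ℝ → ℝ) (d : ℝ) : Set (Seq2 × ℝ) :=
  { p ∈ Gamma f0 f1 d | p.1 ∈ SigmaCod f0 f1 d }

/-- `Σ^sing`: sequences whose spine is a singleton. -/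
def SigmaSing (f0 f1 : ℝ → ℝ) (d : ℝ) : Set Seq2 :=
  { ξ | ξ ∈ SigmaA f0 f1 d ∧ (Ifiber f0 f1 d ξ).Subsingleton }

/-- `Σ^spine`: sequences whose spine is a nondegenerate interval. -/
def SigmaSpine (f0 f1 : ℝ → ℝ) (d : ℝ) : Set Seq2 :=
  { ξ | ξ ∈ SigmaA f0 f1 d ∧ ¬ (Ifiber f0 f1 d ξ).Subsingleton }

/-- `T` restricted to `S` is topologically transitive. -/
def TransOn {α : Type*} [TopologicalSpace α] (T : α → α) (S : Set α) : Prop :=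
  ∀ U V : Set α, IsOpen U → IsOpen V → (U ∩ S).Nonempty → (V ∩ S).Nonempty →
    ∃ n : ℕ, 1 ≤ n ∧ (T^[n] '' (U ∩ S) ∩ (V ∩ S)).Nonempty

/-- `T` restricted to `S` is topologically mixing. -/
def MixOn {α : Type*} [TopologicalSpace α] (T : α → α) (S : Set α) : Prop :=
  ∀ U V : Set α, IsOpen U → IsOpen V → (U ∩ S).Nonempty → (V ∩ S).Nonempty →
    ∃ N : ℕ, ∀ n : ℕ, N ≤ n → (T^[n] '' (U ∩ S) ∩ (V ∩ S)).Nonempty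

/-- A subshift of finite type: the sequences avoiding a finite list of forbidden words. -/
def IsSFT (S : Set Seq2) : Prop :=
  ∃ Fw : Finset (List (Fin 2)), S = { ξ | ∀ w ∈ Fw, ¬ OccursIn w ξ }

/-- Number of words of length `n` appearing in sequences of `S`. -/
noncomputable def wordCount (S : Set Seq2) (n : ℕ) : ℕ :=
  Nat.card { w : List (Fin 2) // w.length = n ∧ ∃ ξ ∈ S, OccursIn w ξ }

/-- Topological entropy of the shift on a subshift `S`, as exponential growth rate of
the number of words. -/
noncomputable def subshiftEntropy (S : Set Seq2) : ℝ :=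
  Filter.limsup (fun n : ℕ => Real.log (wordCount S n) / n) Filter.atTop

/-- `Λ` is `F`-invariant. -/
def IsInvariantSet (f0 f1 : ℝ → ℝ) (Λ : Set (Seq2 × ℝ)) : Prop := F f0 f1 '' Λ = Λ

/-- `Λ` is locally maximal: it is the set of full orbits inside some neighborhood. -/
def IsLocallyMaximal (f0 f1 : ℝ → ℝ) (Λ : Set (Seq2 × ℝ)) : Prop :=
  ∃ V : Set (Seq2 × ℝ), IsOpen V ∧ Λ ⊆ V ∧
    Λ = { X | ∃ Z : ℤ → Seq2 × ℝ, Z 0 = X ∧ (∀ n : ℤ, Z (n + 1) = F f0 f1 (Z n)) ∧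
      ∀ n : ℤ, Z n ∈ V }

/-- Basic set with uniform fiber expansion. -/
def IsBasicExp (f0 f1 df0 df1 : ℝ → ℝ) (d : ℝ) (Λ : Set (Seq2 × ℝ)) : Prop :=
  Λ ⊆ Gamma f0 f1 d ∧ IsCompact Λ ∧ IsInvariantSet f0 f1 Λ ∧ IsLocallyMaximal f0 f1 Λ ∧
  TransOn (F f0 f1) Λ ∧ IsHypExpanding f0 f1 df0 df1 Λ

/-- Basic set with uniform fiber contraction. -/
def IsBasicCon (f0 f1 df0 df1 : ℝ → ℝ) (d : ℝ) (Λ : Set (Seq2 × ℝ)) : Prop :=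
  Λ ⊆ Gamma f0 f1 d ∧ IsCompact Λ ∧ IsInvariantSet f0 f1 Λ ∧ IsLocallyMaximal f0 f1 Λ ∧
  TransOn (F f0 f1) Λ ∧ IsHypContracting f0 f1 df0 df1 d Λ

/-- The entropy function `𝓗(p) = -p log p - (1-p) log (1-p)`. -/
noncomputable def entH (p : ℝ) : ℝ := -(p * Real.log p) - (1 - p) * Real.log (1 - p)

/-!
Write `g = f_{[w]}` and `I = I_{[w]}`. Over the periodic sequence `w^ℤ` the spine is the set of
points of `I` having a full `g`-orbit, forward and backward, inside `I`. For a continuous increasing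
map of a closed interval this maximal invariant set is `[min Fix, max Fix]`: the forward and the
backward orbit of such a point are monotone in opposite directions and converge to fixed points,
one on each side of it, while `g` maps `[min Fix, max Fix]` onto itself. In particular the spine is
empty when `g` has no fixed point.

A fixed point forces a letter `0` in `w`, and then (H2) makes `g'` strictly decreasing on `I`, so
`g` is strictly concave there. Hence `g` has at most two fixed points, with `g' > 1` at the left
and `g' < 1` at the right one (compare with the secant of slope `1`). A unique fixed point lies
strictly inside `I = [a, 1]` because `g(a) = 0 < a` and `g(1) < 1`, so `g - id` has a local
maximum there and `g' = 1`.
-/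

end DGR

section IntervalDynamics

open Function Topology

def maximalInvariantSet (g : ℝ → ℝ) (S : Set ℝ) : Set ℝ :=
  {x | (∀ n, g^[n] x ∈ S) ∧ ∃ z : ℕ → ℝ, z 0 = x ∧ ∀ k, z (k + 1) ∈ S ∧ g (z (k + 1)) = z k}

variable {g : ℝ → ℝ} {S : Set ℝ} {x : ℝ}

lemma exists_isFixedPt_le_of_map_le (hg : Continuous g) (hmono : Monotone g) (hS : IsClosed S)
    (hSb : BddBelow S) (horb : ∀ n, g^[n] x ∈ S) (hx : g x ≤ x) :
    ∃ p ∈ S, IsFixedPt g p ∧ p ≤ x := by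
  have hanti := hmono.antitone_iterate_of_map_le hx
  have hbdd : BddBelow (range fun n => g^[n] x) :=
    hSb.mono (range_subset_iff.2 horb)
  have hlim := tendsto_atTop_ciInf hanti hbdd
  exact ⟨_, hS.mem_of_tendsto hlim (.of_forall horb),
    isFixedPt_of_tendsto_iterate hlim hg.continuousAt, ciInf_le hbdd 0⟩

lemma exists_isFixedPt_ge_of_le_map (hg : Continuous g) (hmono : Monotone g) (hS : IsClosed S)
    (hSb : BddAbove S) (horb : ∀ n, g^[n] x ∈ S) (hx : x ≤ g x) :
    ∃ p ∈ S, IsFixedPt g p ∧ x ≤ p := by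
  have hmon := hmono.monotone_iterate_of_le_map hx
  have hbdd : BddAbove (range fun n => g^[n] x) :=
    hSb.mono (range_subset_iff.2 horb)
  have hlim := tendsto_atTop_ciSup hmon hbdd
  exact ⟨_, hS.mem_of_tendsto hlim (.of_forall horb),
    isFixedPt_of_tendsto_iterate hlim hg.continuousAt, le_ciSup hbdd 0⟩

lemma isFixedPt_of_tendsto_backward {z : ℕ → ℝ} {p : ℝ} (hg : Continuous g)
    (hz : ∀ k, g (z (k + 1)) = z k) (hlim : Tendsto z atTop (𝓝 p)) : IsFixedPt g p := by
  have h := ((hg.tendsto p).comp hlim).comp (tendsto_add_atTop_nat 1)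
  simp only [Function.comp_def, hz] at h
  exact tendsto_nhds_unique h hlim

lemma exists_isFixedPt_ge_of_backward (hg : Continuous g) (hmono : StrictMono g)
    (hS : IsClosed S) (hSb : BddAbove S) {z : ℕ → ℝ}
    (hz : ∀ k, z (k + 1) ∈ S ∧ g (z (k + 1)) = z k) (hx : g (z 0) ≤ z 0) :
    ∃ p ∈ S, IsFixedPt g p ∧ z 0 ≤ p := by
  have hle : ∀ k, g (z k) ≤ z k := by
    intro k
    induction k with
    | zero => exact hx
    | succ k ih => exact hmono.le_iff_le.1 (by rw [(hz k).2]; exact ih)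
  have hmon : Monotone z := monotone_nat_of_le_succ fun k => (hz k).2 ▸ hle (k + 1)
  have hbdd : BddAbove (range fun k => z (k + 1)) :=
    hSb.mono (range_subset_iff.2 fun k => (hz k).1)
  have hlim := tendsto_atTop_ciSup (fun _ _ hab => hmon (Nat.add_le_add_right hab 1)) hbdd
  refine ⟨_, hS.mem_of_tendsto hlim (.of_forall fun k => (hz k).1),
    isFixedPt_of_tendsto_backward hg (fun k => (hz (k + 1)).2) hlim, ?_⟩
  exact (hmon (Nat.zero_le 1)).trans (le_ciSup hbdd 0)

lemma exists_isFixedPt_le_of_backward (hg : Continuous g) (hmono : StrictMono g)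
    (hS : IsClosed S) (hSb : BddBelow S) {z : ℕ → ℝ}
    (hz : ∀ k, z (k + 1) ∈ S ∧ g (z (k + 1)) = z k) (hx : z 0 ≤ g (z 0)) :
    ∃ p ∈ S, IsFixedPt g p ∧ p ≤ z 0 := by
  have hle : ∀ k, z k ≤ g (z k) := by
    intro k
    induction k with
    | zero => exact hx
    | succ k ih => exact hmono.le_iff_le.1 (by rw [(hz k).2]; exact ih)
  have hanti : Antitone z := antitone_nat_of_succ_le fun k => (hz k).2 ▸ hle (k + 1)
  have hbdd : BddBelow (range fun k => z (k + 1)) :=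
    hSb.mono (range_subset_iff.2 fun k => (hz k).1)
  have hlim := tendsto_atTop_ciInf (fun _ _ hab => hanti (Nat.add_le_add_right hab 1)) hbdd
  refine ⟨_, hS.mem_of_tendsto hlim (.of_forall fun k => (hz k).1),
    isFixedPt_of_tendsto_backward hg (fun k => (hz (k + 1)).2) hlim, ?_⟩
  exact (ciInf_le hbdd 0).trans (hanti (Nat.zero_le 1))

lemma exists_isFixedPt_le_and_ge (hg : Continuous g) (hmono : StrictMono g) (hS : IsClosed S)
    (hSb : Bornology.IsBounded S) (hx : x ∈ maximalInvariantSet g S) :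
    (∃ p ∈ S, IsFixedPt g p ∧ p ≤ x) ∧ ∃ p ∈ S, IsFixedPt g p ∧ x ≤ p := by
  obtain ⟨horb, z, rfl, hz⟩ := hx
  rcases le_total (g (z 0)) (z 0) with hle | hge
  · exact ⟨exists_isFixedPt_le_of_map_le hg hmono.monotone hS hSb.bddBelow horb hle,
      exists_isFixedPt_ge_of_backward hg hmono hS hSb.bddAbove hz hle⟩
  · exact ⟨exists_isFixedPt_le_of_backward hg hmono hS hSb.bddBelow hz hge,
      exists_isFixedPt_ge_of_le_map hg hmono.monotone hS hSb.bddAbove horb hge⟩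

lemma maximalInvariantSet_subset_Icc (hg : Continuous g) (hmono : StrictMono g) (hS : IsClosed S)
    (hSb : Bornology.IsBounded S) :
    maximalInvariantSet g S ⊆ Icc (sInf (S ∩ fixedPoints g)) (sSup (S ∩ fixedPoints g)) := by
  intro x hx
  obtain ⟨⟨p, hpS, hp, hpx⟩, ⟨q, hqS, hq, hxq⟩⟩ := exists_isFixedPt_le_and_ge hg hmono hS hSb hx
  have hbdd := hSb.subset (inter_subset_left (t := fixedPoints g))
  exact ⟨csInf_le_of_le hbdd.bddBelow ⟨hpS, hp⟩ hpx, le_csSup_of_le hbdd.bddAbove ⟨hqS, hq⟩ hxq⟩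

lemma Icc_subset_maximalInvariantSet (hg : Continuous g) (hmono : Monotone g) {p q : ℝ}
    (hp : IsFixedPt g p) (hq : IsFixedPt g q) (hpq : p ≤ q) (hS : Icc p q ⊆ S) :
    Icc p q ⊆ maximalInvariantSet g S := by
  have hmaps : MapsTo g (Icc p q) (Icc p q) := fun x hx =>
    ⟨hp.eq ▸ hmono hx.1, hq.eq ▸ hmono hx.2⟩
  have hsurj : ∀ y ∈ Icc p q, ∃ x, x ∈ Icc p q ∧ g x = y := by
    have h := intermediate_value_Icc hpq hg.continuousOn
    rw [hp.eq, hq.eq] at h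
    exact fun y hy => h hy
  choose! pre hpre using hsurj
  intro x hx
  refine ⟨fun n => hS (hmaps.iterate n hx), fun k => pre^[k] x, rfl, fun k => ?_⟩
  have hk : pre^[k] x ∈ Icc p q := MapsTo.iterate (fun y hy => (hpre y hy).1) k hx
  simp only [iterate_succ_apply']
  exact ⟨hS (hpre _ hk).1, (hpre _ hk).2⟩

lemma maximalInvariantSet_eq_Icc (hg : Continuous g) (hmono : StrictMono g) (hS : IsClosed S)
    (hSb : Bornology.IsBounded S) (hSc : S.OrdConnected) (hne : (S ∩ fixedPoints g).Nonempty) :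
    maximalInvariantSet g S = Icc (sInf (S ∩ fixedPoints g)) (sSup (S ∩ fixedPoints g)) := by
  have hZ : IsClosed (S ∩ fixedPoints g) := hS.inter (isClosed_fixedPoints hg)
  have hbdd := hSb.subset (inter_subset_left (t := fixedPoints g))
  have hinf := hZ.csInf_mem hne hbdd.bddBelow
  have hsup := hZ.csSup_mem hne hbdd.bddAbove
  exact (maximalInvariantSet_subset_Icc hg hmono hS hSb).antisymm
    (Icc_subset_maximalInvariantSet hg hmono.monotone hinf.2 hsup.2
      (csInf_le_csSup hne hbdd.bddBelow hbdd.bddAbove) (hSc.out hinf.1 hsup.1))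

end IntervalDynamics

section ConcaveFixedPoints

open Function Topology

variable {g : ℝ → ℝ} {S : Set ℝ}

lemma StrictConcaveOn.eq_or_eq_of_isFixedPt (hg : StrictConcaveOn ℝ S g) {x y z : ℝ}
    (hx : x ∈ S) (hz : z ∈ S) (hfx : IsFixedPt g x) (hfy : IsFixedPt g y) (hfz : IsFixedPt g z)
    (hxy : x ≤ y) (hyz : y ≤ z) : y = x ∨ y = z := by
  by_contra! hne
  have hxy' := lt_of_le_of_ne hxy hne.1.symm
  have hyz' := lt_of_le_of_ne hyz hne.2
  have := hg.slope_anti_adjacent hx hz hxy' hyz'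
  rw [hfx.eq, hfy.eq, hfz.eq, div_self (sub_ne_zero.2 hyz'.ne'),
    div_self (sub_ne_zero.2 hxy'.ne')] at this
  exact this.false

lemma StrictConcaveOn.inter_fixedPoints_eq_pair (hg : StrictConcaveOn ℝ S g) (hc : Continuous g)
    (hS : IsClosed S) (hSb : Bornology.IsBounded S) (hne : (S ∩ fixedPoints g).Nonempty) :
    S ∩ fixedPoints g = {sInf (S ∩ fixedPoints g), sSup (S ∩ fixedPoints g)} := by
  have hZ : IsClosed (S ∩ fixedPoints g) := hS.inter (isClosed_fixedPoints hc)
  have hbdd := hSb.subset (inter_subset_left (t := fixedPoints g))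
  have hinf := hZ.csInf_mem hne hbdd.bddBelow
  have hsup := hZ.csSup_mem hne hbdd.bddAbove
  refine Subset.antisymm (fun y hy => ?_) (insert_subset hinf (singleton_subset_iff.2 hsup))
  exact hg.eq_or_eq_of_isFixedPt hinf.1 hsup.1 hinf.2 hy.2 hsup.2
    (csInf_le hbdd.bddBelow hy) (le_csSup hbdd.bddAbove hy)

lemma StrictConcaveOn.one_lt_of_isFixedPt (hg : StrictConcaveOn ℝ S g) {x y g' : ℝ}
    (hx : x ∈ S) (hy : y ∈ S) (hxy : x < y) (hfx : IsFixedPt g x) (hfy : IsFixedPt g y)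
    (hd : HasDerivAt g g' x) : 1 < g' := by
  have := hg.slope_lt_of_hasDerivAt hx hy hxy hd
  rwa [slope_def_field, hfx.eq, hfy.eq, div_self (sub_ne_zero.2 hxy.ne')] at this

lemma StrictConcaveOn.lt_one_of_isFixedPt (hg : StrictConcaveOn ℝ S g) {x y g' : ℝ}
    (hx : x ∈ S) (hy : y ∈ S) (hxy : x < y) (hfx : IsFixedPt g x) (hfy : IsFixedPt g y)
    (hd : HasDerivAt g g' y) : g' < 1 := by
  have := hg.lt_slope_of_hasDerivAt hx hy hxy hd
  rwa [slope_def_field, hfx.eq, hfy.eq, div_self (sub_ne_zero.2 hxy.ne')] at this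

lemma Function.IsFixedPt.eq_one_of_hasDerivAt {a b p g' : ℝ} (hp : IsFixedPt g p)
    (hg : ContinuousOn g (Icc a b)) (hd : HasDerivAt g g' p) (hap : a < p) (hpb : p < b)
    (ha : g a < a) (hb : g b < b) (huniq : ∀ x ∈ Icc a b, IsFixedPt g x → x = p) : g' = 1 := by
  have hsub : ContinuousOn (fun t => g t - t) (Icc a b) := hg.sub continuousOn_id
  have hle : ∀ x ∈ Ioo a b, g x ≤ x := by
    intro x hx
    by_contra! hlt
    obtain ⟨c, hc, hc0⟩ := intermediate_value_Icc hx.1.le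
      (hsub.mono (Icc_subset_Icc le_rfl hx.2.le))
      (show (0 : ℝ) ∈ Icc (g a - a) (g x - x) from ⟨by linarith, by linarith⟩)
    obtain ⟨c', hc', hc0'⟩ := intermediate_value_Icc' hx.2.le
      (hsub.mono (Icc_subset_Icc hx.1.le le_rfl))
      (show (0 : ℝ) ∈ Icc (g b - b) (g x - x) from ⟨by linarith, by linarith⟩)
    have hcp := huniq c ⟨hc.1, hc.2.trans hx.2.le⟩ (sub_eq_zero.1 hc0)
    have hcp' := huniq c' ⟨hx.1.le.trans hc'.1, hc'.2⟩ (sub_eq_zero.1 hc0')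
    have hxp : x = p := le_antisymm (hcp' ▸ hc'.1) (hcp ▸ hc.2)
    exact hlt.ne (hxp ▸ hp.eq.symm)
  have hmax : IsLocalMax (fun t => g t - t) p :=
    Filter.mem_of_superset (Ioo_mem_nhds hap hpb) fun x hx => by
      simp only [mem_ofPred_eq, hp.eq, sub_self]
      linarith [hle x hx]
  linarith [hmax.hasDerivAt_eq_zero (hd.sub (hasDerivAt_id p))]

end ConcaveFixedPoints

namespace DGR

variable {f0 f1 df0 df1 : ℝ → ℝ} {d : ℝ}

namespace H1

lemma continuous_f0 (h : H1 f0 f1 df0 df1 d) : Continuous f0 :=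
  continuous_iff_continuousAt.2 fun x => (h.hasDeriv0 x).continuousAt

lemma continuous_f1 (h : H1 f0 f1 df0 df1 d) : Continuous f1 :=
  continuous_iff_continuousAt.2 fun x => (h.hasDeriv1 x).continuousAt

lemma f0_zero (h : H1 f0 f1 df0 df1 d) : f0 0 = 0 := by
  obtain ⟨z, hz, hz0⟩ := h.surj0 (left_mem_Icc.2 zero_le_one)
  have := (h.maps0 (left_mem_Icc.2 zero_le_one)).1
  linarith [h.mono0.monotone hz.1]

lemma f0_one (h : H1 f0 f1 df0 df1 d) : f0 1 = 1 := by
  obtain ⟨z, hz, hz1⟩ := h.surj0 (right_mem_Icc.2 zero_le_one)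
  have := (h.maps0 (right_mem_Icc.2 zero_le_one)).2
  linarith [h.mono0.monotone hz.2]

lemma f1_one_lt_one (h : H1 f0 f1 df0 df1 d) : f1 1 < 1 := h.f1_below 1 ⟨h.d_mem.2.le, le_rfl⟩

lemma strictMono_letter (h : H1 f0 f1 df0 df1 d) (i : Fin 2) :
    StrictMono (if i = 0 then f0 else f1) := by
  split
  exacts [h.mono0, h.mono1]

lemma continuous_letter (h : H1 f0 f1 df0 df1 d) (i : Fin 2) :
    Continuous (if i = 0 then f0 else f1) := by
  split
  exacts [h.continuous_f0, h.continuous_f1]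

lemma letter_le_one (h : H1 f0 f1 df0 df1 d) {i : Fin 2} {x : ℝ} (hx : x ≤ 1) :
    (if i = 0 then f0 else f1) x ≤ 1 := by
  split
  · exact h.f0_one ▸ h.mono0.monotone hx
  · exact (h.mono1.monotone hx).trans h.f1_one_lt_one.le

end H1

section Words

lemma fWord_append (u v : List (Fin 2)) (x : ℝ) :
    fWord f0 f1 (u ++ v) x = fWord f0 f1 v (fWord f0 f1 u x) := by
  induction u generalizing x with
  | nil => rfl
  | cons i u ih => exact ih _

lemma wordAdm.mem_Icc {w : List (Fin 2)} {x : ℝ} (hx : wordAdm f0 f1 d w x) :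
    x ∈ Icc (0 : ℝ) 1 := by
  cases w with
  | nil => exact hx
  | cons i u => exact hx.1

lemma wordAdm.fWord_mem_Icc {w : List (Fin 2)} {x : ℝ} (hx : wordAdm f0 f1 d w x) :
    fWord f0 f1 w x ∈ Icc (0 : ℝ) 1 := by
  induction w generalizing x with
  | nil => exact hx
  | cons i u ih => exact ih hx.2.2

lemma wordAdm_append (u v : List (Fin 2)) (x : ℝ) :
    wordAdm f0 f1 d (u ++ v) x ↔ wordAdm f0 f1 d u x ∧ wordAdm f0 f1 d v (fWord f0 f1 u x) := by
  induction u generalizing x with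
  | nil => exact ⟨fun hx => ⟨hx.mem_Icc, hx⟩, And.right⟩
  | cons i u ih => simp only [List.cons_append, wordAdm, ih, fWord, and_assoc]

lemma fWord_strictMono (h : H1 f0 f1 df0 df1 d) (w : List (Fin 2)) :
    StrictMono (fWord f0 f1 w) := by
  induction w with
  | nil => exact strictMono_id
  | cons i u ih => exact ih.comp (h.strictMono_letter i)

lemma fWord_continuous (h : H1 f0 f1 df0 df1 d) (w : List (Fin 2)) :
    Continuous (fWord f0 f1 w) := by
  induction w with
  | nil => exact continuous_id
  | cons i u ih => exact ih.comp (h.continuous_letter i)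

lemma hasDerivAt_fWord (h : H1 f0 f1 df0 df1 d) (w : List (Fin 2)) (x : ℝ) :
    HasDerivAt (fWord f0 f1 w) (fWordDeriv f0 f1 df0 df1 w x) x := by
  induction w generalizing x with
  | nil => exact hasDerivAt_id x
  | cons i u ih =>
    have hi : HasDerivAt (if i = 0 then f0 else f1) (if i = 0 then df0 x else df1 x) x := by
      split
      exacts [h.hasDeriv0 x, h.hasDeriv1 x]
    rw [fWordDeriv, mul_comm]
    exact (ih _).comp x hi

lemma wordAdm_of_le (h : H1 f0 f1 df0 df1 d) {w : List (Fin 2)} {x y : ℝ}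
    (hx : wordAdm f0 f1 d w x) (hxy : x ≤ y) (hy : y ≤ 1) : wordAdm f0 f1 d w y := by
  induction w generalizing x y with
  | nil => exact ⟨hx.1.trans hxy, hy⟩
  | cons i u ih =>
    exact ⟨⟨hx.1.1.trans hxy, hy⟩, fun hi => (hx.2.1 hi).trans hxy,
      ih hx.2.2 ((h.strictMono_letter i).monotone hxy) (h.letter_le_one hy)⟩

lemma isClosed_IWord (h : H1 f0 f1 df0 df1 d) (w : List (Fin 2)) :
    IsClosed (IWord f0 f1 d w) := by
  induction w with
  | nil => exact isClosed_Icc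
  | cons i u ih =>
    have hd : IsClosed {x : ℝ | i = 1 → d ≤ x} := by
      by_cases hi : i = 1
      · simpa [hi] using isClosed_le continuous_const continuous_id
      · simp [hi]
    exact isClosed_Icc.inter (hd.inter (ih.preimage (h.continuous_letter i)))

lemma ordConnected_IWord (h : H1 f0 f1 df0 df1 d) (w : List (Fin 2)) :
    (IWord f0 f1 d w).OrdConnected :=
  ⟨fun _ hx _ hy _ hz => wordAdm_of_le h hx hz.1 (hz.2.trans hy.mem_Icc.2)⟩

end Words

section Concavity

lemma df0_pos (h : H1 f0 f1 df0 df1 d) (h2 : H2 df0 df1 d) {x : ℝ} (hx : x ∈ Icc (0 : ℝ) 1) :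
    0 < df0 x :=
  h.deriv0_one.1.trans_le (h2.1.antitoneOn hx (right_mem_Icc.2 zero_le_one) hx.2)

lemma df1_pos (h : H1 f0 f1 df0 df1 d) (h2 : H2 df0 df1 d) {x : ℝ} (hx : x ∈ Icc d 1) :
    0 < df1 x :=
  h.deriv1_one.trans_le (h2.2 hx (right_mem_Icc.2 h.d_mem.2.le) hx.2)

lemma fWordDeriv_pos (h : H1 f0 f1 df0 df1 d) (h2 : H2 df0 df1 d) {w : List (Fin 2)} {x : ℝ}
    (hx : wordAdm f0 f1 d w x) : 0 < fWordDeriv f0 f1 df0 df1 w x := by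
  induction w generalizing x with
  | nil => exact one_pos
  | cons i u ih =>
    refine mul_pos ?_ (ih hx.2.2)
    obtain rfl | rfl : i = 0 ∨ i = 1 := by omega
    · exact df0_pos h h2 hx.1
    · exact df1_pos h h2 ⟨hx.2.1 rfl, hx.1.2⟩

lemma antitoneOn_fWordDeriv (h : H1 f0 f1 df0 df1 d) (h2 : H2 df0 df1 d) (w : List (Fin 2)) :
    AntitoneOn (fWordDeriv f0 f1 df0 df1 w) (IWord f0 f1 d w) := by
  induction w with
  | nil => exact fun _ _ _ _ _ => le_rfl
  | cons i u ih =>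
    intro x hx y hy hxy
    have hB := ih hx.2.2 hy.2.2 ((h.strictMono_letter i).monotone hxy)
    have hBy := fWordDeriv_pos h h2 hy.2.2
    obtain rfl | rfl : i = 0 ∨ i = 1 := by omega
    · exact mul_le_mul (h2.1.antitoneOn hx.1 hy.1 hxy) hB hBy.le (df0_pos h h2 hx.1).le
    · exact mul_le_mul (h2.2 ⟨hx.2.1 rfl, hx.1.2⟩ ⟨hy.2.1 rfl, hy.1.2⟩ hxy) hB hBy.le
        (df1_pos h h2 ⟨hx.2.1 rfl, hx.1.2⟩).le

lemma strictAntiOn_fWordDeriv (h : H1 f0 f1 df0 df1 d) (h2 : H2 df0 df1 d) {w : List (Fin 2)}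
    (h0 : (0 : Fin 2) ∈ w) : StrictAntiOn (fWordDeriv f0 f1 df0 df1 w) (IWord f0 f1 d w) := by
  induction w with
  | nil => simp at h0
  | cons i u ih =>
    intro x hx y hy hxy
    have hfxy := h.strictMono_letter i hxy
    have hBy := fWordDeriv_pos h h2 hy.2.2
    obtain rfl | rfl : i = 0 ∨ i = 1 := by omega
    · exact mul_lt_mul (h2.1 hx.1 hy.1 hxy)
        (antitoneOn_fWordDeriv h h2 u hx.2.2 hy.2.2 hfxy.le) hBy (df0_pos h h2 hx.1).le
    · have h0u : (0 : Fin 2) ∈ u := by simpa using h0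
      exact mul_lt_mul' (h2.2 ⟨hx.2.1 rfl, hx.1.2⟩ ⟨hy.2.1 rfl, hy.1.2⟩ hxy.le)
        (ih h0u hx.2.2 hy.2.2 hfxy) hBy.le (df1_pos h h2 ⟨hx.2.1 rfl, hx.1.2⟩)

lemma strictConcaveOn_fWord (h : H1 f0 f1 df0 df1 d) (h2 : H2 df0 df1 d) {w : List (Fin 2)}
    (h0 : (0 : Fin 2) ∈ w) : StrictConcaveOn ℝ (IWord f0 f1 d w) (fWord f0 f1 w) := by
  have hderiv : deriv (fWord f0 f1 w) = fWordDeriv f0 f1 df0 df1 w :=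
    funext fun x => (hasDerivAt_fWord h w x).deriv
  refine StrictAntiOn.strictConcaveOn_of_deriv (ordConnected_IWord h w).convex
    (fWord_continuous h w).continuousOn ?_
  rw [hderiv]
  exact (strictAntiOn_fWordDeriv h h2 h0).mono interior_subset

end Concavity

section Endpoints

lemma isBounded_IWord (w : List (Fin 2)) : Bornology.IsBounded (IWord f0 f1 d w) :=
  Metric.isBounded_Icc (0 : ℝ) 1 |>.subset fun _ hx => wordAdm.mem_Icc hx

lemma IWord_cons (h : H1 f0 f1 df0 df1 d) (i : Fin 2) (u : List (Fin 2)) :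
    IWord f0 f1 d (i :: u) =
      Icc (if i = 0 then 0 else d) 1 ∩ (if i = 0 then f0 else f1) ⁻¹' IWord f0 f1 d u := by
  ext x
  obtain rfl | rfl : i = 0 ∨ i = 1 := by omega
  · simp [IWord, wordAdm, and_assoc]
  · have := h.d_mem.1
    simp only [IWord, wordAdm, mem_Icc, mem_inter_iff, mem_preimage, one_ne_zero, if_false]
    exact ⟨fun ⟨⟨_, hx1⟩, hdx, hu⟩ => ⟨⟨hdx trivial, hx1⟩, hu⟩,
      fun ⟨⟨hdx, hx1⟩, hu⟩ => ⟨⟨by linarith, hx1⟩, fun _ => hdx, hu⟩⟩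

lemma wordAdm_of_forall_eq_zero (h : H1 f0 f1 df0 df1 d) {w : List (Fin 2)}
    (hz : ∀ i ∈ w, i = 0) {x : ℝ} (hx : x ∈ Icc (0 : ℝ) 1) : wordAdm f0 f1 d w x := by
  induction w generalizing x with
  | nil => exact hx
  | cons i u ih =>
    obtain rfl := hz i (List.mem_cons_self ..)
    exact ⟨hx, fun h01 => absurd h01 (by decide),
      ih (fun j hj => hz j (List.mem_cons_of_mem _ hj)) (h.maps0 hx)⟩

lemma fWord_of_forall_eq_zero {w : List (Fin 2)} (hz : ∀ i ∈ w, i = 0) {x : ℝ} (hx : f0 x = x) :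
    fWord f0 f1 w x = x := by
  induction w with
  | nil => rfl
  | cons i u ih =>
    obtain rfl := hz i (List.mem_cons_self ..)
    simpa [fWord, hx] using ih fun j hj => hz j (List.mem_cons_of_mem _ hj)

lemma fWord_le_self_of_forall_eq_one (h : H1 f0 f1 df0 df1 d) {w : List (Fin 2)}
    (h1 : ∀ i ∈ w, i = 1) {x : ℝ} (hx : wordAdm f0 f1 d w x) : fWord f0 f1 w x ≤ x := by
  induction w generalizing x with
  | nil => exact le_rfl
  | cons i u ih =>
    obtain rfl := h1 i (List.mem_cons_self ..)
    exact (ih (fun j hj => h1 j (List.mem_cons_of_mem _ hj)) hx.2.2).trans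
      (h.f1_below x ⟨hx.2.1 rfl, hx.1.2⟩).le

lemma fWord_lt_self_of_forall_eq_one (h : H1 f0 f1 df0 df1 d) {w : List (Fin 2)} (hw : w ≠ [])
    (h1 : ∀ i ∈ w, i = 1) {x : ℝ} (hx : wordAdm f0 f1 d w x) : fWord f0 f1 w x < x := by
  obtain ⟨i, u, rfl⟩ := List.exists_cons_of_ne_nil hw
  obtain rfl := h1 i (List.mem_cons_self ..)
  exact (fWord_le_self_of_forall_eq_one h (fun j hj => h1 j (List.mem_cons_of_mem _ hj))
    hx.2.2).trans_lt (h.f1_below x ⟨hx.2.1 rfl, hx.1.2⟩)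

lemma fWord_le_one (h : H1 f0 f1 df0 df1 d) (w : List (Fin 2)) {y : ℝ} (hy : y ≤ 1) :
    fWord f0 f1 w y ≤ 1 := by
  induction w generalizing y with
  | nil => exact hy
  | cons i u ih => exact ih (h.letter_le_one hy)

lemma fWord_one_lt_one (h : H1 f0 f1 df0 df1 d) {w : List (Fin 2)} (h1 : (1 : Fin 2) ∈ w) :
    fWord f0 f1 w 1 < 1 := by
  induction w with
  | nil => simp at h1
  | cons i u ih =>
    obtain rfl | rfl : i = 0 ∨ i = 1 := by omega
    · simpa [fWord, h.f0_one] using ih (by simpa using h1)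
    · exact (fWord_strictMono h u h.f1_one_lt_one).trans_le (fWord_le_one h u le_rfl)

lemma not_wordAdm_zero (h : H1 f0 f1 df0 df1 d) {w : List (Fin 2)} (h1 : (1 : Fin 2) ∈ w) :
    ¬ wordAdm f0 f1 d w 0 := by
  induction w with
  | nil => simp at h1
  | cons i u ih =>
    obtain rfl | rfl : i = 0 ∨ i = 1 := by omega
    · intro hx
      exact ih (by simpa using h1) (by simpa [h.f0_zero] using hx.2.2)
    · exact fun hx => (hx.2.1 rfl).not_gt h.d_mem.1

lemma exists_isLeast_Icc_inter_preimage {f : ℝ → ℝ} (hf : StrictMono f) (hfc : Continuous f)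
    {b c' : ℝ} {T : Set ℝ} (hT : IsLeast T c') (hb : f b ≤ c')
    (hne : (Icc b 1 ∩ f ⁻¹' T).Nonempty) : ∃ c, IsLeast (Icc b 1 ∩ f ⁻¹' T) c ∧ f c = c' := by
  obtain ⟨x, hx, hfx⟩ := hne
  obtain ⟨c, hc, hfc'⟩ := intermediate_value_Icc hx.1 hfc.continuousOn ⟨hb, hT.2 hfx⟩
  exact ⟨c, ⟨⟨⟨hc.1, hc.2.trans hx.2⟩, show f c ∈ T from hfc' ▸ hT.1⟩,
    fun y hy => hf.le_iff_le.1 (hfc' ▸ hT.2 hy.2)⟩, hfc'⟩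

lemma exists_isLeast_IWord (h : H1 f0 f1 df0 df1 d) {w : List (Fin 2)} (h1 : (1 : Fin 2) ∈ w)
    (hne : (IWord f0 f1 d w).Nonempty) :
    ∃ c, IsLeast (IWord f0 f1 d w) c ∧ fWord f0 f1 w c = 0 := by
  induction w with
  | nil => simp at h1
  | cons i u ih =>
    rw [IWord_cons h] at hne ⊢
    by_cases hu : (1 : Fin 2) ∈ u
    · obtain ⟨c', hc', hgc'⟩ := ih hu ⟨_, hne.some_mem.2⟩
      have hb : (if i = 0 then f0 else f1) (if i = 0 then 0 else d) ≤ c' := by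
        have := hc'.1.mem_Icc.1
        split <;> simp [h.f0_zero, h.f1_d, this]
      obtain ⟨c, hc, hfc⟩ := exists_isLeast_Icc_inter_preimage (h.strictMono_letter i)
        (h.continuous_letter i) hc' hb hne
      exact ⟨c, hc, by simp only [fWord]; rw [hfc, hgc']⟩
    · obtain rfl : i = 1 := ((List.mem_cons.1 h1).resolve_right hu).symm
      have hz : ∀ j ∈ u, j = 0 := fun j hj => by
        obtain rfl | rfl : j = 0 ∨ j = 1 := by omega
        exacts [rfl, absurd hj hu]
      refine ⟨d, ⟨⟨⟨le_rfl, h.d_mem.2.le⟩, ?_⟩, fun y hy => hy.1.1⟩, ?_⟩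
      · show wordAdm f0 f1 d u ((if (1 : Fin 2) = 0 then f0 else f1) d)
        simpa [h.f1_d] using wordAdm_of_forall_eq_zero h hz (left_mem_Icc.2 zero_le_one)
      · simpa [fWord, h.f1_d] using fWord_of_forall_eq_zero (f1 := f1) hz h.f0_zero

end Endpoints

section Sequences

lemma seqWord_add (ξ : Seq2) (a : ℤ) (m n : ℕ) :
    seqWord ξ a (m + n) = seqWord ξ a m ++ seqWord ξ (a + m) n := by
  simp only [seqWord, List.ofFn_add, Fin.val_castLE, Fin.val_natAdd, Nat.cast_add, add_assoc]

lemma seqWord_succ (ξ : Seq2) (a : ℤ) (n : ℕ) :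
    seqWord ξ a (n + 1) = seqWord ξ a n ++ [ξ (a + n)] := by
  rw [seqWord_add]
  simp [seqWord]

lemma seqWord_succ' (ξ : Seq2) (a : ℤ) (n : ℕ) :
    seqWord ξ a (n + 1) = ξ a :: seqWord ξ (a + 1) n := by
  simp [seqWord, List.ofFn_succ, add_assoc, add_comm (1 : ℤ)]

@[simp] lemma seqWord_zero (ξ : Seq2) (a : ℤ) : seqWord ξ a 0 = [] := rfl

lemma wordAdm_seqWord_of_le (ξ : Seq2) (a : ℤ) {m n : ℕ} (hmn : m ≤ n) {x : ℝ}
    (hx : wordAdm f0 f1 d (seqWord ξ a n) x) : wordAdm f0 f1 d (seqWord ξ a m) x := by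
  rw [← Nat.add_sub_cancel' hmn, seqWord_add, wordAdm_append] at hx
  exact hx.1

lemma fIter_eq_fWord_seqWord (ξ : Seq2) (n : ℕ) (x : ℝ) :
    fIter f0 f1 ξ n x = fWord f0 f1 (seqWord ξ 0 n) x := by
  induction n with
  | zero => rfl
  | succ n ih => simp [seqWord_succ, fWord_append, ← ih, fIter, fWord]

lemma forwardAdmissible_iff (ξ : Seq2) (x : ℝ) :
    forwardAdmissible f0 f1 d ξ x ↔ ∀ n, wordAdm f0 f1 d (seqWord ξ 0 n) x := by
  have hstep : ∀ n, wordAdm f0 f1 d (seqWord ξ 0 (n + 1)) x ↔ wordAdm f0 f1 d (seqWord ξ 0 n) x ∧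
      (fIter f0 f1 ξ n x ∈ Icc (0 : ℝ) 1 ∧ (ξ n = 1 → d ≤ fIter f0 f1 ξ n x)) ∧
      fIter f0 f1 ξ (n + 1) x ∈ Icc (0 : ℝ) 1 := by
    intro n
    simp [seqWord_succ, wordAdm_append, fIter_eq_fWord_seqWord, fWord_append, wordAdm, fWord,
      and_assoc]
  refine ⟨fun hf n => ?_, fun hw n => ((hstep n).1 (hw (n + 1))).2.1⟩
  induction n with
  | zero => exact (hf 0).1
  | succ n ih => exact (hstep n).2 ⟨ih, hf n, (hf (n + 1)).1⟩

end Sequences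

section Periodic

lemma perSeq_add_mul (w : List (Fin 2)) (n k : ℤ) :
    perSeq w (n + k * w.length) = perSeq w n := by
  simp [perSeq, Int.add_mul_emod_self_right]

lemma seqWord_perSeq (w : List (Fin 2)) (k : ℤ) :
    seqWord (perSeq w) (k * w.length) w.length = w := by
  refine List.ext_getElem (by simp [seqWord]) fun i h1 h2 => ?_
  simp only [seqWord, List.getElem_ofFn, add_comm (k * _), perSeq_add_mul]
  simp [perSeq, Int.emod_eq_of_lt, h2]

lemma seqWord_perSeq_mul_succ (w : List (Fin 2)) (q : ℕ) :
    seqWord (perSeq w) 0 ((q + 1) * w.length) = seqWord (perSeq w) 0 (q * w.length) ++ w := by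
  rw [add_one_mul, seqWord_add, show ((0 : ℤ) + ((q * w.length : ℕ) : ℤ)) = (q : ℤ) * w.length by
    push_cast; ring, seqWord_perSeq]

lemma fWord_seqWord_perSeq_mul (w : List (Fin 2)) (q : ℕ) (x : ℝ) :
    fWord f0 f1 (seqWord (perSeq w) 0 (q * w.length)) x = (fWord f0 f1 w)^[q] x := by
  induction q with
  | zero => simp [fWord]
  | succ q ih => rw [seqWord_perSeq_mul_succ, fWord_append, ih, Function.iterate_succ_apply']

lemma forwardAdmissible_perSeq_iff {w : List (Fin 2)} (hw : w ≠ []) (x : ℝ) :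
    forwardAdmissible f0 f1 d (perSeq w) x ↔ ∀ q, wordAdm f0 f1 d w ((fWord f0 f1 w)^[q] x) := by
  have hsucc : ∀ q, wordAdm f0 f1 d (seqWord (perSeq w) 0 ((q + 1) * w.length)) x ↔
      wordAdm f0 f1 d (seqWord (perSeq w) 0 (q * w.length)) x ∧
        wordAdm f0 f1 d w ((fWord f0 f1 w)^[q] x) := fun q => by
    rw [seqWord_perSeq_mul_succ, wordAdm_append, fWord_seqWord_perSeq_mul]
  rw [forwardAdmissible_iff]
  refine ⟨fun hx q => ((hsucc q).1 (hx _)).2, fun hx n => ?_⟩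
  have hblocks : ∀ q, wordAdm f0 f1 d (seqWord (perSeq w) 0 (q * w.length)) x := by
    intro q
    induction q with
    | zero => simpa [wordAdm] using (hx 0).mem_Icc
    | succ q ih => exact (hsucc q).2 ⟨ih, hx q⟩
  exact wordAdm_seqWord_of_le _ _ (Nat.le_mul_of_pos_right n (List.length_pos_iff.2 hw))
    (hblocks n)

lemma wordAdm_seqWord_of_backward {ξ : Seq2} {y : ℕ → ℝ}
    (hy : ∀ m : ℕ, y m ∈ Icc (0 : ℝ) 1 ∧
      (ξ (-(m : ℤ) - 1) = 0 → f0 (y (m + 1)) = y m) ∧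
      (ξ (-(m : ℤ) - 1) = 1 → d ≤ y (m + 1) ∧ f1 (y (m + 1)) = y m)) (m n : ℕ) :
    wordAdm f0 f1 d (seqWord ξ (-((m + n : ℕ) : ℤ)) n) (y (m + n)) ∧
      fWord f0 f1 (seqWord ξ (-((m + n : ℕ) : ℤ)) n) (y (m + n)) = y m := by
  induction n with
  | zero => exact ⟨(hy m).1, rfl⟩
  | succ n ih =>
    have hidx : -((m + (n + 1) : ℕ) : ℤ) = -((m + n : ℕ) : ℤ) - 1 := by push_cast; ring
    have hstep : (if ξ (-((m + n : ℕ) : ℤ) - 1) = 0 then f0 else f1) (y (m + n + 1)) = y (m + n) ∧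
        (ξ (-((m + n : ℕ) : ℤ) - 1) = 1 → d ≤ y (m + n + 1)) := by
      obtain ⟨-, h0, h1⟩ := hy (m + n)
      split_ifs with hξ
      · exact ⟨h0 hξ, fun h => absurd (hξ.symm.trans h) (by decide)⟩
      · have hξ1 : ξ (-((m + n : ℕ) : ℤ) - 1) = 1 := by omega
        exact ⟨(h1 hξ1).2, fun _ => (h1 hξ1).1⟩
    rw [seqWord_succ', hidx, sub_add_cancel, ← add_assoc]
    refine ⟨⟨(hy _).1, hstep.2, ?_⟩, ?_⟩
    · exact hstep.1 ▸ ih.1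
    · change fWord f0 f1 _ ((if _ = 0 then f0 else f1) _) = _
      rw [hstep.1, ih.2]

lemma exists_backward_orbit_of_backwardAdmissible {w : List (Fin 2)} {x : ℝ}
    (hx : backwardAdmissible f0 f1 d (perSeq w) x) :
    ∃ z : ℕ → ℝ, z 0 = x ∧
      ∀ k, wordAdm f0 f1 d w (z (k + 1)) ∧ fWord f0 f1 w (z (k + 1)) = z k := by
  obtain ⟨y, rfl, hy⟩ := hx
  refine ⟨fun k => y (k * w.length), by simp, fun k => ?_⟩
  have hblock := wordAdm_seqWord_of_backward hy (k * w.length) w.length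
  rwa [show -(((k * w.length + w.length : ℕ)) : ℤ) = (-(k + 1 : ℤ)) * w.length by push_cast; ring,
    seqWord_perSeq, ← add_one_mul] at hblock

lemma seqWord_neg_sub_succ (ξ : Seq2) {N m : ℕ} (hm : m + 1 ≤ N) :
    seqWord ξ (-(N : ℤ)) (N - m) = seqWord ξ (-(N : ℤ)) (N - (m + 1)) ++ [ξ (-(m : ℤ) - 1)] := by
  rw [show N - m = N - (m + 1) + 1 by omega, seqWord_succ]
  congr 3
  push_cast [Nat.cast_sub hm]
  ring

lemma seqWord_perSeq_neg_succ_mul (w : List (Fin 2)) {k m : ℕ} (hm : m ≤ k * w.length) :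
    seqWord (perSeq w) (-(((k + 1) * w.length : ℕ) : ℤ)) ((k + 1) * w.length - m) =
      w ++ seqWord (perSeq w) (-((k * w.length : ℕ) : ℤ)) (k * w.length - m) := by
  rw [show (k + 1) * w.length - m = w.length + (k * w.length - m) by rw [add_one_mul]; omega,
    seqWord_add, show -(((k + 1) * w.length : ℕ) : ℤ) = (-(k + 1 : ℤ)) * w.length by
      push_cast; ring, seqWord_perSeq]
  congr 2
  push_cast
  ring

lemma backwardAdmissible_of_backward_orbit {w : List (Fin 2)} (hw : w ≠ []) {z : ℕ → ℝ}
    (hz : ∀ k, wordAdm f0 f1 d w (z (k + 1)) ∧ fWord f0 f1 w (z (k + 1)) = z k) :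
    backwardAdmissible f0 f1 d (perSeq w) (z 0) := by
  set L := w.length
  -- `W k m` is the block of letters at positions `-k L, …, -m - 1`.
  set W : ℕ → ℕ → List (Fin 2) := fun k m => seqWord (perSeq w) (-((k * L : ℕ) : ℤ)) (k * L - m)
  have hW0 : W 0 0 = [] := by simp [W]
  have hadm : ∀ k, wordAdm f0 f1 d (W k 0) (z k) := by
    intro k
    induction k with
    | zero => rw [hW0]; exact (hz 0).2 ▸ (hz 0).1.fWord_mem_Icc
    | succ k ih =>
      rw [show W (k + 1) 0 = w ++ W k 0 from seqWord_perSeq_neg_succ_mul w (Nat.zero_le _),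
        wordAdm_append]
      exact ⟨(hz k).1, (hz k).2 ▸ ih⟩
  have hshift : ∀ k m, m ≤ k * L →
      fWord f0 f1 (W (k + 1) m) (z (k + 1)) = fWord f0 f1 (W k m) (z k) := fun k m hm => by
    rw [show W (k + 1) m = w ++ W k m from seqWord_perSeq_neg_succ_mul w hm, fWord_append,
      (hz k).2]
  refine ⟨fun m => fWord f0 f1 (W (m + 1) m) (z (m + 1)), ?_, fun m => ?_⟩
  · exact (hshift 0 0 (Nat.zero_le _)).trans (by rw [hW0]; rfl)
  · have hL : 1 ≤ L := List.length_pos_iff.2 hw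
    have hm2 : m + 1 ≤ (m + 2) * L := by nlinarith
    have hlast : W (m + 2) m = W (m + 2) (m + 1) ++ [perSeq w (-(m : ℤ) - 1)] :=
      seqWord_neg_sub_succ _ hm2
    have hadm_m : wordAdm f0 f1 d (W (m + 2) m) (z (m + 2)) :=
      wordAdm_seqWord_of_le _ _ (Nat.sub_le_sub_left (Nat.zero_le m) _) (hadm (m + 2))
    have hym : fWord f0 f1 (W (m + 1) m) (z (m + 1)) =
        (if perSeq w (-(m : ℤ) - 1) = 0 then f0 else f1)
          (fWord f0 f1 (W (m + 2) (m + 1)) (z (m + 2))) := by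
      rw [← hshift (m + 1) m (by nlinarith), hlast, fWord_append]
      rfl
    rw [hlast, wordAdm_append] at hadm_m
    obtain ⟨-, hd, hy0⟩ := hadm_m.2
    simp only
    rw [hym]
    exact ⟨hy0, fun h0 => by simp [h0], fun h1 => ⟨hd h1, by simp [h1]⟩⟩

lemma Ifiber_perSeq {w : List (Fin 2)} (hw : w ≠ []) :
    Ifiber f0 f1 d (perSeq w) = maximalInvariantSet (fWord f0 f1 w) (IWord f0 f1 d w) := by
  ext x
  constructor
  · rintro ⟨hf, hb⟩
    obtain ⟨z, hz0, hz⟩ := exists_backward_orbit_of_backwardAdmissible hb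
    exact ⟨(forwardAdmissible_perSeq_iff hw x).1 hf, z, hz0, hz⟩
  · rintro ⟨hf, z, rfl, hz⟩
    exact ⟨(forwardAdmissible_perSeq_iff hw _).2 hf, backwardAdmissible_of_backward_orbit hw hz⟩

end Periodic

lemma mem_SigmaA_iff {ξ : Seq2} : ξ ∈ SigmaA f0 f1 d ↔ (Ifiber f0 f1 d ξ).Nonempty :=
  ⟨fun ⟨⟨_, x⟩, hx, hξ⟩ => hξ ▸ ⟨x, hx⟩, fun ⟨x, hx⟩ => ⟨(ξ, x), hx, rfl⟩⟩

section FixedPointsOfWords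

open Function

lemma zero_mem_of_mem_fixedPoints (h : H1 f0 f1 df0 df1 d) {w : List (Fin 2)} (hw : w ≠ [])
    {p : ℝ} (hp : p ∈ IWord f0 f1 d w ∩ fixedPoints (fWord f0 f1 w)) : (0 : Fin 2) ∈ w := by
  by_contra h0
  have h1 : ∀ i ∈ w, i = 1 := fun i hi => by
    obtain rfl | rfl : i = 0 ∨ i = 1 := by omega
    exacts [absurd hi h0, rfl]
  exact (fWord_lt_self_of_forall_eq_one h hw h1 hp.1).ne hp.2

lemma fWordDeriv_eq_one_of_fixedPoints_eq_singleton (h : H1 f0 f1 df0 df1 d) {w : List (Fin 2)}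
    {p : ℝ} (hZ : IWord f0 f1 d w ∩ fixedPoints (fWord f0 f1 w) = {p}) :
    fWordDeriv f0 f1 df0 df1 w p = 1 := by
  have hpZ : p ∈ IWord f0 f1 d w ∩ fixedPoints (fWord f0 f1 w) := hZ ▸ rfl
  have h1 : (1 : Fin 2) ∈ w := by
    by_contra h1
    have hz : ∀ i ∈ w, i = 0 := fun i hi => by
      obtain rfl | rfl : i = 0 ∨ i = 1 := by omega
      exacts [rfl, absurd hi h1]
    have hfix : ∀ x ∈ Icc (0 : ℝ) 1, f0 x = x → x = p := fun x hx hfx =>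
      (hZ ▸ ⟨wordAdm_of_forall_eq_zero h hz hx, fWord_of_forall_eq_zero hz hfx⟩ :
        x ∈ ({p} : Set ℝ))
    exact zero_ne_one ((hfix 0 (left_mem_Icc.2 zero_le_one) h.f0_zero).trans
      (hfix 1 (right_mem_Icc.2 zero_le_one) h.f0_one).symm)
  obtain ⟨c, hc, hgc⟩ := exists_isLeast_IWord h h1 ⟨p, hpZ.1⟩
  have hc0 : 0 < c := hc.1.mem_Icc.1.lt_of_ne fun h0 => not_wordAdm_zero h h1 (h0 ▸ hc.1)
  have hcp : c < p := (hc.2 hpZ.1).lt_of_ne fun hcp => by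
    have := hpZ.2.eq
    rw [← hcp, hgc] at this
    exact hc0.ne this
  have hp1 : p < 1 := hpZ.1.mem_Icc.2.lt_of_ne fun hp1 => by
    have := hpZ.2.eq
    rw [hp1] at this
    exact (fWord_one_lt_one h h1).ne this
  have hIcc : Icc c 1 ⊆ IWord f0 f1 d w :=
    (ordConnected_IWord h w).out hc.1 (wordAdm_of_le h hc.1 hc.1.mem_Icc.2 le_rfl)
  exact hpZ.2.eq_one_of_hasDerivAt (fWord_continuous h w).continuousOn (hasDerivAt_fWord h w p)
    hcp hp1 (hgc ▸ hc0) (fWord_one_lt_one h h1)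
    fun x hx hfx => (hZ ▸ ⟨hIcc hx, hfx⟩ : x ∈ ({p} : Set ℝ))

end FixedPointsOfWords

theorem statement_13_general (f0 f1 df0 df1 : ℝ → ℝ) (d : ℝ) (hH1 : H1 f0 f1 df0 df1 d)
    (hH2 : H2 df0 df1 d) (w : List (Fin 2)) (hw : w ≠ []) :
    ((∃ p : ℝ, wordAdm f0 f1 d w p ∧ fWord f0 f1 w p = p) →
      perSeq w ∈ SigmaA f0 f1 d ∧
      ((∃ p₁ p₂ : ℝ, p₁ < p₂ ∧
          { x : ℝ | wordAdm f0 f1 d w x ∧ fWord f0 f1 w x = x } = {p₁, p₂} ∧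
          1 < fWordDeriv f0 f1 df0 df1 w p₁ ∧ fWordDeriv f0 f1 df0 df1 w p₂ < 1 ∧
          Ifiber f0 f1 d (perSeq w) = Icc p₁ p₂) ∨
        (∃ p : ℝ, { x : ℝ | wordAdm f0 f1 d w x ∧ fWord f0 f1 w x = x } = {p} ∧
          fWordDeriv f0 f1 df0 df1 w p = 1 ∧ Ifiber f0 f1 d (perSeq w) = {p}))) ∧
    ((¬ ∃ p : ℝ, wordAdm f0 f1 d w p ∧ fWord f0 f1 w p = p) →
      perSeq w ∉ SigmaA f0 f1 d) := by
  set Z := IWord f0 f1 d w ∩ Function.fixedPoints (fWord f0 f1 w)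
  have hZ : {x : ℝ | wordAdm f0 f1 d w x ∧ fWord f0 f1 w x = x} = Z := rfl
  have hcont := fWord_continuous hH1 w
  have hmono := fWord_strictMono hH1 w
  have hclosed := isClosed_IWord hH1 w
  have hbdd := isBounded_IWord (f0 := f0) (f1 := f1) (d := d) w
  have hfiber := Ifiber_perSeq (f0 := f0) (f1 := f1) (d := d) hw
  rw [hZ]
  refine ⟨fun ⟨p, hp⟩ => ?_, fun hno hmem => ?_⟩
  · have hne : Z.Nonempty := ⟨p, hp⟩
    have hconc := strictConcaveOn_fWord hH1 hH2 (zero_mem_of_mem_fixedPoints hH1 hw hp)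
    have hpair := hconc.inter_fixedPoints_eq_pair hcont hclosed hbdd hne
    have hfib : Ifiber f0 f1 d (perSeq w) = Icc (sInf Z) (sSup Z) := hfiber.trans
      (maximalInvariantSet_eq_Icc hcont hmono hclosed hbdd (ordConnected_IWord hH1 w) hne)
    have hinf : sInf Z ∈ Z := hpair.ge (mem_insert _ _)
    have hsup : sSup Z ∈ Z := hpair.ge (mem_insert_of_mem _ rfl)
    have hZb := hbdd.subset (inter_subset_left (t := Function.fixedPoints (fWord f0 f1 w)))
    have hle : sInf Z ≤ sSup Z := csInf_le_csSup hne hZb.bddBelow hZb.bddAbove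
    refine ⟨mem_SigmaA_iff.2 (hfib ▸ nonempty_Icc.2 hle), ?_⟩
    rcases hle.lt_or_eq with hlt | heq
    · exact Or.inl ⟨_, _, hlt, hpair,
        hconc.one_lt_of_isFixedPt hinf.1 hsup.1 hlt hinf.2 hsup.2 (hasDerivAt_fWord hH1 w _),
        hconc.lt_one_of_isFixedPt hinf.1 hsup.1 hlt hinf.2 hsup.2 (hasDerivAt_fWord hH1 w _), hfib⟩
    · rw [← heq, pair_eq_singleton] at hpair
      rw [← heq, Icc_self] at hfib
      exact Or.inr ⟨_, hpair, fWordDeriv_eq_one_of_fixedPoints_eq_singleton hH1 hpair, hfib⟩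
  · obtain ⟨x, hx⟩ := mem_SigmaA_iff.1 hmem
    rw [hfiber] at hx
    obtain ⟨⟨p, hpI, hp, -⟩, -⟩ := exists_isFixedPt_le_and_ge hcont hmono hclosed hbdd hx
    exact hno ⟨p, hpI, hp⟩

theorem statement_13 (f0 f1 df0 df1 : ℝ → ℝ) (d : ℝ) (hH1 : H1 f0 f1 df0 df1 d)
    (hH2 : H2 df0 df1 d) (w : List (Fin 2)) (hw : w ≠ [])
    (hI : (IWord f0 f1 d w).Nonempty) :
    ((∃ p : ℝ, wordAdm f0 f1 d w p ∧ fWord f0 f1 w p = p) →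
      perSeq w ∈ SigmaA f0 f1 d ∧
      ((∃ p₁ p₂ : ℝ, p₁ < p₂ ∧
          { x : ℝ | wordAdm f0 f1 d w x ∧ fWord f0 f1 w x = x } = {p₁, p₂} ∧
          1 < fWordDeriv f0 f1 df0 df1 w p₁ ∧ fWordDeriv f0 f1 df0 df1 w p₂ < 1 ∧
          Ifiber f0 f1 d (perSeq w) = Icc p₁ p₂) ∨
        (∃ p : ℝ, { x : ℝ | wordAdm f0 f1 d w x ∧ fWord f0 f1 w x = x } = {p} ∧
          fWordDeriv f0 f1 df0 df1 w p = 1 ∧ Ifiber f0 f1 d (perSeq w) = {p}))) ∧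
    ((¬ ∃ p : ℝ, wordAdm f0 f1 d w p ∧ fWord f0 f1 w p = p) →
      perSeq w ∉ SigmaA f0 f1 d) :=
  statement_13_general f0 f1 df0 df1 d hH1 hH2 w hw

end DGR
end

section
/- Assume (H1), (H2) and (H2+). Let ξ ∈ Σ and let x₁ < x₂ < x₃ be points of I_{ξ⁺}; write xᵢⁿ = f_ξⁿ(xᵢ) for n ≥ 0. If Σ_{k=0}^{∞} (x₃ᵏ − x₁ᵏ) = ∞, then lim_{n→∞} (x₃ⁿ − x₂ⁿ) = 0. -/
open Set MeasureTheory Filter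

namespace DGR

/-! ## Statement 15 -/


lemma DGR_exp_half_le {u : ℝ} (h0 : 0 ≤ u) (h1 : u ≤ 1) : Real.exp (u / 2) ≤ 1 + u := by
  have h2 : (0:ℝ) < 1 - u / 2 := by linarith
  have h3 : Real.exp (u / 2) * (1 - u / 2) ≤ 1 := by
    calc Real.exp (u / 2) * (1 - u / 2) ≤ Real.exp (u / 2) * Real.exp (-(u / 2)) := by
          apply mul_le_mul_of_nonneg_left _ (Real.exp_nonneg _)
          linarith [Real.add_one_le_exp (-(u / 2))]
      _ = 1 := by rw [← Real.exp_add]; simp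
  nlinarith [Real.exp_pos (u / 2), mul_nonneg h0 (sub_nonneg.mpr h1)]

lemma DGR_step_est (f df : ℝ → ℝ) (hf : ∀ x, HasDerivAt f (df x) x) (hmono : StrictMono f)
    {a b : ℝ} (hanti : AntitoneOn df (Icc a b)) {M : ℝ} (hM : 1 < M)
    (hplus : ∀ x ∈ Icc a b, ∀ y ∈ Icc a b, x < y →
      M⁻¹ * (y - x) ≤ Real.log (df x) - Real.log (df y))
    {x₁ x₂ x₃ : ℝ} (h1 : x₁ ∈ Icc a b) (h3 : x₃ ∈ Icc a b)
    (h12 : x₁ < x₂) (h23 : x₂ < x₃) :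
    ∃ D : ℝ, 0 < D ∧ f x₃ - f x₂ ≤ D * (x₃ - x₂) ∧
      D * ((x₂ - x₁) * (1 + (x₂ - x₁) / (4 * M))) ≤ f x₂ - f x₁ := by
  have hM0 : (0:ℝ) < M := lt_trans one_pos hM
  have h2 : x₂ ∈ Icc a b := ⟨h1.1.trans h12.le, h23.le.trans h3.2⟩
  have hm1 : x₁ < (x₁ + x₂) / 2 := by linarith
  have hm2 : (x₁ + x₂) / 2 < x₂ := by linarith
  have hmI : (x₁ + x₂) / 2 ∈ Icc a b := ⟨h1.1.trans hm1.le, hm2.le.trans h2.2⟩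
  have mvt : ∀ p q : ℝ, p < q → ∃ c ∈ Ioo p q, df c = (f q - f p) / (q - p) := fun p q hpq =>
    exists_hasDerivAt_eq_slope f df hpq
      (fun x _ => (hf x).continuousAt.continuousWithinAt) (fun x _ => hf x)
  obtain ⟨c₃, hc₃, hc₃e⟩ := mvt x₂ x₃ h23
  obtain ⟨c₁, hc₁, hc₁e⟩ := mvt ((x₁ + x₂) / 2) x₂ hm2
  obtain ⟨c₂, hc₂, hc₂e⟩ := mvt x₁ ((x₁ + x₂) / 2) hm1
  have hc₃I : c₃ ∈ Icc a b := ⟨h2.1.trans hc₃.1.le, hc₃.2.le.trans h3.2⟩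
  have hc₁I : c₁ ∈ Icc a b := ⟨hmI.1.trans hc₁.1.le, hc₁.2.le.trans h2.2⟩
  have hc₂I : c₂ ∈ Icc a b := ⟨h1.1.trans hc₂.1.le, hc₂.2.le.trans hmI.2⟩
  have hc₃pos : 0 < df c₃ := by
    rw [hc₃e]; exact div_pos (sub_pos.2 (hmono h23)) (sub_pos.2 h23)
  have hx2pos : 0 < df x₂ := lt_of_lt_of_le hc₃pos (hanti h2 hc₃I hc₃.1.le)
  refine ⟨df x₂, hx2pos, ?_, ?_⟩
  · have he : f x₃ - f x₂ = df c₃ * (x₃ - x₂) := by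
      rw [hc₃e]; exact (div_mul_cancel₀ _ (sub_ne_zero.mpr h23.ne')).symm
    rw [he]
    exact mul_le_mul_of_nonneg_right (hanti h2 hc₃I hc₃.1.le) (by linarith)
  · have e1 : f x₂ - f ((x₁ + x₂) / 2) = df c₁ * ((x₂ - x₁) / 2) := by
      have : x₂ - (x₁ + x₂) / 2 = (x₂ - x₁) / 2 := by ring
      rw [hc₁e, this]; exact (div_mul_cancel₀ _ (by intro h; apply h12.ne'; linarith : (x₂ - x₁) / 2 ≠ 0)).symm
    have e2 : f ((x₁ + x₂) / 2) - f x₁ = df c₂ * ((x₂ - x₁) / 2) := by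
      have : (x₁ + x₂) / 2 - x₁ = (x₂ - x₁) / 2 := by ring
      rw [hc₂e, this]; exact (div_mul_cancel₀ _ (by intro h; apply h12.ne'; linarith : (x₂ - x₁) / 2 ≠ 0)).symm
    have hd1 : df x₂ ≤ df c₁ := hanti hc₁I h2 hc₁.2.le
    have hd2 : df ((x₁ + x₂) / 2) ≤ df c₂ := hanti hc₂I hmI hc₂.2.le
    have hdm : df x₂ ≤ df ((x₁ + x₂) / 2) := hanti hmI h2 hm2.le
    have hdmpos : 0 < df ((x₁ + x₂) / 2) := lt_of_lt_of_le hx2pos hdm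
    have hlog := hplus _ hmI x₂ h2 hm2
    have hexp : df x₂ * Real.exp (M⁻¹ * (x₂ - (x₁ + x₂) / 2)) ≤ df ((x₁ + x₂) / 2) := by
      have h4 : Real.exp (M⁻¹ * (x₂ - (x₁ + x₂) / 2))
          ≤ Real.exp (Real.log (df ((x₁ + x₂) / 2)) - Real.log (df x₂)) :=
        Real.exp_le_exp.2 hlog
      rw [Real.exp_sub, Real.exp_log hdmpos, Real.exp_log hx2pos] at h4
      calc df x₂ * Real.exp (M⁻¹ * (x₂ - (x₁ + x₂) / 2))
          ≤ df x₂ * (df ((x₁ + x₂) / 2) / df x₂) :=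
            mul_le_mul_of_nonneg_left h4 hx2pos.le
        _ = df ((x₁ + x₂) / 2) := by field_simp
    have hexp2 : 1 + M⁻¹ * (x₂ - (x₁ + x₂) / 2) ≤ Real.exp (M⁻¹ * (x₂ - (x₁ + x₂) / 2)) := by
      linarith [Real.add_one_le_exp (M⁻¹ * (x₂ - (x₁ + x₂) / 2))]
    have key2 : df x₂ * (1 + M⁻¹ * ((x₂ - x₁) / 2)) ≤ df ((x₁ + x₂) / 2) := by
      have hmeq : x₂ - (x₁ + x₂) / 2 = (x₂ - x₁) / 2 := by ring
      calc df x₂ * (1 + M⁻¹ * ((x₂ - x₁) / 2))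
          = df x₂ * (1 + M⁻¹ * (x₂ - (x₁ + x₂) / 2)) := by rw [hmeq]
        _ ≤ df x₂ * Real.exp (M⁻¹ * (x₂ - (x₁ + x₂) / 2)) :=
            mul_le_mul_of_nonneg_left hexp2 hx2pos.le
        _ ≤ df ((x₁ + x₂) / 2) := hexp
    have A1 : df x₂ * ((x₂ - x₁) / 2) ≤ f x₂ - f ((x₁ + x₂) / 2) := by
      rw [e1]; exact mul_le_mul_of_nonneg_right hd1 (by linarith)
    have A2 : df x₂ * ((1 + M⁻¹ * ((x₂ - x₁) / 2)) * ((x₂ - x₁) / 2))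
        ≤ f ((x₁ + x₂) / 2) - f x₁ := by
      rw [e2]
      have : df x₂ * ((1 + M⁻¹ * ((x₂ - x₁) / 2)) * ((x₂ - x₁) / 2))
          = (df x₂ * (1 + M⁻¹ * ((x₂ - x₁) / 2))) * ((x₂ - x₁) / 2) := by ring
      rw [this]
      exact mul_le_mul_of_nonneg_right (key2.trans hd2) (by linarith)
    have heq : df x₂ * ((x₂ - x₁) * (1 + (x₂ - x₁) / (4 * M)))
        = df x₂ * ((x₂ - x₁) / 2)
          + df x₂ * ((1 + M⁻¹ * ((x₂ - x₁) / 2)) * ((x₂ - x₁) / 2)) := by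
      field_simp
      ring
    linarith


lemma DGR_seq_lemma (g h G : ℕ → ℝ) {M : ℝ} (hM : 1 < M)
    (hg : ∀ n, 0 < g n) (hh : ∀ n, 0 < h n) (hh1 : ∀ n, h n ≤ 1)
    (hG : ∀ n, G n = g n + h n)
    (hkey : ∀ n, ∃ D : ℝ, 0 < D ∧ g (n + 1) ≤ D * g n ∧
      D * (h n * (1 + h n / (4 * M))) ≤ h (n + 1))
    (hdiv : Tendsto (fun n => ∑ k ∈ Finset.range n, G k) atTop atTop) :
    Tendsto g atTop (nhds 0) := by
  have hM0 : (0:ℝ) < M := lt_trans one_pos hM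
  set r : ℕ → ℝ := fun n => g n / h n with hrdef
  have hrpos : ∀ n, 0 < r n := fun n => div_pos (hg n) (hh n)
  have hu0 : ∀ n, 0 ≤ h n / (4 * M) := fun n => div_nonneg (hh n).le (by positivity)
  have hu1 : ∀ n, h n / (4 * M) ≤ 1 := fun n => by
    rw [div_le_one (by positivity)]; nlinarith [hh1 n, (hh n).le]
  have hr_step : ∀ n, r (n + 1) * (1 + h n / (4 * M)) ≤ r n := by
    intro n
    obtain ⟨D, hD, hgs, hhs⟩ := hkey n
    simp only [hrdef]
    rw [div_mul_eq_mul_div, div_le_div_iff₀ (hh (n + 1)) (hh n)]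
    have t1 : g (n + 1) * (1 + h n / (4 * M)) * h n
        ≤ D * g n * (1 + h n / (4 * M)) * h n := by
      have := mul_le_mul_of_nonneg_right
        (mul_le_mul_of_nonneg_right hgs (by linarith [hu0 n] : (0:ℝ) ≤ 1 + h n / (4 * M)))
        (hh n).le
      linarith
    have t2 : g n * (D * (h n * (1 + h n / (4 * M)))) ≤ g n * h (n + 1) :=
      mul_le_mul_of_nonneg_left hhs (hg n).le
    nlinarith [t1, t2]
  have hr_mono : ∀ n, r (n + 1) ≤ r n := by
    intro n
    have := hr_step n
    nlinarith [hrpos (n + 1), hu0 n]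
  have hr0 : ∀ n, r n ≤ r 0 := by
    intro n
    induction n with
    | zero => exact le_refl _
    | succ n ih => exact (hr_mono n).trans ih
  have hprod : ∀ n, r n * Real.exp (∑ k ∈ Finset.range n, h k / (8 * M)) ≤ r 0 := by
    intro n
    induction n with
    | zero => simp
    | succ n ih =>
      rw [Finset.sum_range_succ, Real.exp_add]
      have e1 : Real.exp (h n / (8 * M)) ≤ 1 + h n / (4 * M) := by
        have : h n / (8 * M) = (h n / (4 * M)) / 2 := by ring
        rw [this]
        exact DGR_exp_half_le (hu0 n) (hu1 n)
      have e2 : r (n + 1) * Real.exp (h n / (8 * M)) ≤ r n := by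
        calc r (n + 1) * Real.exp (h n / (8 * M))
            ≤ r (n + 1) * (1 + h n / (4 * M)) :=
              mul_le_mul_of_nonneg_left e1 (hrpos (n + 1)).le
          _ ≤ r n := hr_step n
      calc r (n + 1) * (Real.exp (∑ k ∈ Finset.range n, h k / (8 * M))
              * Real.exp (h n / (8 * M)))
          = (r (n + 1) * Real.exp (h n / (8 * M)))
              * Real.exp (∑ k ∈ Finset.range n, h k / (8 * M)) := by ring
        _ ≤ r n * Real.exp (∑ k ∈ Finset.range n, h k / (8 * M)) :=
            mul_le_mul_of_nonneg_right e2 (Real.exp_nonneg _)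
        _ ≤ r 0 := ih
  have h1r0 : (0:ℝ) < 1 + r 0 := by linarith [hrpos 0]
  have hhG : ∀ n, G n / (1 + r 0) ≤ h n := by
    intro n
    rw [div_le_iff₀ h1r0, hG n]
    have : g n = r n * h n := by
      simp only [hrdef]; rw [div_mul_cancel₀ _ (hh n).ne']
    nlinarith [hr0 n, hh n, hrpos n]
  set c : ℝ := (8 * M * (1 + r 0))⁻¹ with hcdef
  have hc : 0 < c := by rw [hcdef]; positivity
  have hsum : ∀ n, c * (∑ k ∈ Finset.range n, G k) ≤ ∑ k ∈ Finset.range n, h k / (8 * M) := by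
    intro n
    rw [Finset.mul_sum]
    apply Finset.sum_le_sum
    intro k _
    have e : c * G k = (G k / (1 + r 0)) * (8 * M)⁻¹ := by
      rw [hcdef, div_eq_mul_inv, mul_inv]; ring
    rw [e]
    calc (G k / (1 + r 0)) * (8 * M)⁻¹ ≤ h k * (8 * M)⁻¹ :=
          mul_le_mul_of_nonneg_right (hhG k) (by positivity)
      _ = h k / (8 * M) := by rw [div_eq_mul_inv]
  have hbound : ∀ n, g n ≤ r 0 * Real.exp (-(c * ∑ k ∈ Finset.range n, G k)) := by
    intro n
    have b1 : g n ≤ r n := by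
      have : g n = r n * h n := by
        simp only [hrdef]; rw [div_mul_cancel₀ _ (hh n).ne']
      nlinarith [hrpos n, hh1 n, hh n]
    have b2 : r n ≤ r 0 * Real.exp (-(∑ k ∈ Finset.range n, h k / (8 * M))) := by
      have := mul_le_mul_of_nonneg_right (hprod n)
        (Real.exp_nonneg (-(∑ k ∈ Finset.range n, h k / (8 * M))))
      rw [mul_assoc, ← Real.exp_add] at this
      simpa using this
    have b3 : Real.exp (-(∑ k ∈ Finset.range n, h k / (8 * M)))
        ≤ Real.exp (-(c * ∑ k ∈ Finset.range n, G k)) :=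
      Real.exp_le_exp.2 (by linarith [hsum n])
    calc g n ≤ r n := b1
      _ ≤ r 0 * Real.exp (-(∑ k ∈ Finset.range n, h k / (8 * M))) := b2
      _ ≤ r 0 * Real.exp (-(c * ∑ k ∈ Finset.range n, G k)) :=
          mul_le_mul_of_nonneg_left b3 (hrpos 0).le
  have t1 : Tendsto (fun n => c * ∑ k ∈ Finset.range n, G k) atTop atTop :=
    hdiv.const_mul_atTop hc
  have t2 : Tendsto (fun n => -(c * ∑ k ∈ Finset.range n, G k)) atTop atBot :=
    tendsto_neg_atTop_atBot.comp t1
  have t3 : Tendsto (fun n => Real.exp (-(c * ∑ k ∈ Finset.range n, G k))) atTop (nhds 0) :=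
    Real.tendsto_exp_atBot.comp t2
  have t4 : Tendsto (fun n => r 0 * Real.exp (-(c * ∑ k ∈ Finset.range n, G k)))
      atTop (nhds 0) := by
    simpa using t3.const_mul (r 0)
  exact squeeze_zero (fun n => (hg n).le) hbound t4


theorem statement_15 (f0 f1 df0 df1 : ℝ → ℝ) (d : ℝ) (hH1 : H1 f0 f1 df0 df1 d)
    (hH2 : H2 df0 df1 d) (hH2p : ∃ M : ℝ, H2plus df0 df1 d M)
    (ξ : Seq2) (hξ : ξ ∈ SigmaA f0 f1 d)
    (x₁ x₂ x₃ : ℝ) (h1 : x₁ ∈ Iplus f0 f1 d ξ) (h2 : x₂ ∈ Iplus f0 f1 d ξ)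
    (h3 : x₃ ∈ Iplus f0 f1 d ξ) (h12 : x₁ < x₂) (h23 : x₂ < x₃)
    (hdiv : Tendsto (fun n : ℕ =>
      ∑ k ∈ Finset.range n, (fIter f0 f1 ξ k x₃ - fIter f0 f1 ξ k x₁)) atTop atTop) :
    Tendsto (fun n : ℕ => fIter f0 f1 ξ n x₃ - fIter f0 f1 ξ n x₂) atTop (nhds 0) := by
  obtain ⟨M, hM1, hp0, hp1⟩ := hH2p
  have h1' : forwardAdmissible f0 f1 d ξ x₁ := h1
  have h2' : forwardAdmissible f0 f1 d ξ x₂ := h2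
  have h3' : forwardAdmissible f0 f1 d ξ x₃ := h3
  have hmono : ∀ n : ℕ, StrictMono (fIter f0 f1 ξ n) := by
    intro n
    induction n with
    | zero => exact fun a b hab => hab
    | succ n ih =>
      intro a b hab
      show (if ξ (n : ℤ) = 0 then f0 else f1) (fIter f0 f1 ξ n a)
          < (if ξ (n : ℤ) = 0 then f0 else f1) (fIter f0 f1 ξ n b)
      split_ifs with hb
      · exact hH1.mono0 (ih hab)
      · exact hH1.mono1 (ih hab)
  have hkey : ∀ n : ℕ, ∃ D : ℝ, 0 < D ∧
      fIter f0 f1 ξ (n + 1) x₃ - fIter f0 f1 ξ (n + 1) x₂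
        ≤ D * (fIter f0 f1 ξ n x₃ - fIter f0 f1 ξ n x₂) ∧
      D * ((fIter f0 f1 ξ n x₂ - fIter f0 f1 ξ n x₁) *
          (1 + (fIter f0 f1 ξ n x₂ - fIter f0 f1 ξ n x₁) / (4 * M)))
        ≤ fIter f0 f1 ξ (n + 1) x₂ - fIter f0 f1 ξ (n + 1) x₁ := by
    intro n
    have h12n : fIter f0 f1 ξ n x₁ < fIter f0 f1 ξ n x₂ := hmono n h12
    have h23n : fIter f0 f1 ξ n x₂ < fIter f0 f1 ξ n x₃ := hmono n h23
    have hrec : ∀ x : ℝ, fIter f0 f1 ξ (n + 1) x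
        = (if ξ (n : ℤ) = 0 then f0 else f1) (fIter f0 f1 ξ n x) := fun _ => rfl
    by_cases hb : ξ (n : ℤ) = 0
    · have := DGR_step_est f0 df0 hH1.hasDeriv0 hH1.mono0 hH2.1.antitoneOn hM1
        (fun x hx y hy hxy => (hp0 x hx y hy hxy).1) (h1' n).1 (h3' n).1 h12n h23n
      simpa [hrec, hb] using this
    · have hb1 : ξ (n : ℤ) = 1 := by omega
      have hd1n : d ≤ fIter f0 f1 ξ n x₁ := (h1' n).2 hb1
      have hmem1 : fIter f0 f1 ξ n x₁ ∈ Icc d 1 := ⟨hd1n, (h1' n).1.2⟩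
      have hmem3 : fIter f0 f1 ξ n x₃ ∈ Icc d 1 :=
        ⟨hd1n.trans (h12n.trans h23n).le, (h3' n).1.2⟩
      have := DGR_step_est f1 df1 hH1.hasDeriv1 hH1.mono1 hH2.2 hM1
        (fun x hx y hy hxy => (hp1 x hx y hy hxy).1) hmem1 hmem3 h12n h23n
      simpa [hrec, hb] using this
  exact DGR_seq_lemma
    (fun n => fIter f0 f1 ξ n x₃ - fIter f0 f1 ξ n x₂)
    (fun n => fIter f0 f1 ξ n x₂ - fIter f0 f1 ξ n x₁)
    (fun n => fIter f0 f1 ξ n x₃ - fIter f0 f1 ξ n x₁) hM1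
    (fun n => sub_pos.2 (hmono n h23)) (fun n => sub_pos.2 (hmono n h12))
    (fun n => by
      show fIter f0 f1 ξ n x₂ - fIter f0 f1 ξ n x₁ ≤ 1
      linarith [((h2' n).1).2, ((h1' n).1).1])
    (fun n => by
      show fIter f0 f1 ξ n x₃ - fIter f0 f1 ξ n x₁
        = (fIter f0 f1 ξ n x₃ - fIter f0 f1 ξ n x₂) + (fIter f0 f1 ξ n x₂ - fIter f0 f1 ξ n x₁)
      ring) hkey hdiv

end DGR
end
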